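/- arXiv:2509.11321 — 4 statements merged into one kernel-verified Lean document; each statement's English description precedes it below -/
import Mathlib

section
/- Let u, v, w be unit vectors in F³ (F = ℝ or ℂ) such that u and v are not parallel. Then there exists a finite composition of linear isometric automorphisms of F³, each of which fixes either u or v, whose composite maps u to w. -/
/-!
Let `H` be the group generated by the stabilizers of `u` and `v`. The stabilizer of a unit vector
`p` acts transitively on each level set `{x | ‖x‖ = 1 ∧ ⟪p, x⟫ = c}`, so two unit vectors lie in one
`H`-orbit as soon as they have the same inner product with `u`, or with `v`.

Since `dim E ≥ 3` there is a unit vector `n ⟂ u, v`; write `P_p(c) = c • p + √(1 - ‖c‖²) • n`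
(`hemispherePoint n p c`). Matching inner products with `v` and then with `u` puts `P_u(c)`,
`P_v(c ⟪v, u⟫)` and `P_u(c ⟪v, u⟫ ⟪u, v⟫)` in one orbit, so `‖c‖` can be shrunk by the factor
`‖⟪v, u⟫‖² < 1` as often as needed. A small enough `c` is the `u`-coordinate of some `P_e(t)` with
`e ⟂ v, n`, and `P_e(t)` has the same inner product with `v` as `n`. Hence every `P_u(c)` lies in
the orbit of `n`; this applies both to `u = P_u(1)` and to `P_u(⟪u, w⟫)`, which is in the orbit
of `w`.
-/

open scoped InnerProductSpace
open MulAction Module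

variable {𝕜 E : Type*} [RCLike 𝕜] [NormedAddCommGroup E] [InnerProductSpace 𝕜 E]

namespace LinearIsometryEquiv

instance applyMulAction : MulAction (E ≃ₗᵢ[𝕜] E) E where
  smul f x := f x
  one_smul _ := rfl
  mul_smul _ _ _ := rfl

lemma list_prod_apply (L : List (E ≃ₗᵢ[𝕜] E)) (x : E) :
    L.prod x = L.foldr (fun f y => f y) x := by
  induction L with
  | nil => rfl
  | cons f L ih => simp [ih]

end LinearIsometryEquiv

lemma Subgroup.exists_list_of_mem_sup {G : Type*} [Group G] {H K : Subgroup G} {g : G}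
    (hg : g ∈ H ⊔ K) : ∃ L : List G, (∀ f ∈ L, f ∈ H ∨ f ∈ K) ∧ L.prod = g := by
  rw [Subgroup.sup_eq_closure, ← Subgroup.mem_toSubmonoid, Subgroup.closure_toSubmonoid] at hg
  obtain ⟨L, hL, rfl⟩ := Submonoid.exists_list_of_mem_closure hg
  exact ⟨L, fun f hf => by simpa using hL f hf, rfl⟩

lemma Orthonormal.exists_linearIsometryEquiv_apply_eq [FiniteDimensional 𝕜 E] {ι : Type*}
    [Fintype ι] {v w : ι → E} (hv : Orthonormal 𝕜 v) (hw : Orthonormal 𝕜 w) :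
    ∃ g : E ≃ₗᵢ[𝕜] E, ∀ i, g (v i) = w i := by
  let κ := Fin (finrank 𝕜 E - Fintype.card ι)
  have hcard : finrank 𝕜 E = Fintype.card (ι ⊕ κ) := by
    have := hv.linearIndependent.fintype_card_le_finrank
    simp only [Fintype.card_sum, Fintype.card_fin, κ]
    omega
  have extend {x : ι → E} (hx : Orthonormal 𝕜 x) :
      ∃ b : OrthonormalBasis (ι ⊕ κ) 𝕜 E, ∀ i, b (.inl i) = x i := by
    have hx' : Orthonormal 𝕜 ((Set.range Sum.inl).domRestrict (Sum.elim x (0 : κ → E))) := by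
      convert hx.comp _ (Equiv.Set.rangeInl ι κ).injective using 1
      ext ⟨_, i, rfl⟩
      rfl
    obtain ⟨b, hb⟩ := hx'.exists_orthonormalBasis_extension_of_card_eq hcard
    exact ⟨b, fun i => hb _ ⟨i, rfl⟩⟩
  obtain ⟨b, hb⟩ := extend hv
  obtain ⟨b', hb'⟩ := extend hw
  exact ⟨b.equiv b' (.refl _), fun i => by rw [← hb, ← hb', b.equiv_apply_basis]; rfl⟩

variable (𝕜) in
lemma norm_sub_inner_smul_sq {p : E} (hp : ‖p‖ = 1) (x : E) :
    ‖x - ⟪p, x⟫_𝕜 • p‖ ^ 2 = ‖x‖ ^ 2 - ‖⟪p, x⟫_𝕜‖ ^ 2 := by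
  rw [@norm_sub_sq 𝕜, inner_smul_right, ← inner_conj_symm, RCLike.conj_mul, norm_smul, hp]
  norm_cast
  rw [RCLike.norm_conj]
  ring

variable (𝕜) in
lemma inner_sub_inner_smul_eq_zero {p : E} (hp : ‖p‖ = 1) (x : E) :
    ⟪p, x - ⟪p, x⟫_𝕜 • p⟫_𝕜 = 0 := by
  simp [inner_sub_right, inner_smul_right, hp]

lemma norm_inner_lt_one_of_not_exists_smul {u v : E} (hu : ‖u‖ = 1) (hv : ‖v‖ = 1)
    (h : ¬ ∃ c : 𝕜, u = c • v) : ‖⟪v, u⟫_𝕜‖ < 1 := by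
  have hu0 : u ≠ 0 := norm_ne_zero_iff.mp (by simp [hu])
  have hv0 : v ≠ 0 := norm_ne_zero_iff.mp (by simp [hv])
  refine lt_of_le_of_ne (by simpa [hu, hv] using norm_inner_le_norm (𝕜 := 𝕜) v u) fun h1 => h ?_
  obtain ⟨r, -, hr⟩ := (norm_inner_eq_norm_iff hv0 hu0).mp (by rw [h1, hu, hv, one_mul])
  exact ⟨r, hr⟩

lemma exists_norm_eq_one_inner_eq_zero [FiniteDimensional 𝕜 E] (hE : 2 < finrank 𝕜 E)
    (u v : E) : ∃ n : E, ‖n‖ = 1 ∧ ⟪u, n⟫_𝕜 = 0 ∧ ⟪v, n⟫_𝕜 = 0 := by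
  classical
  set K := Submodule.span 𝕜 (({u, v} : Finset E) : Set E)
  have hK : finrank 𝕜 K ≤ 2 := (finrank_span_finset_le_card _).trans Finset.card_le_two
  obtain ⟨x, hx⟩ : ∃ x : Kᗮ, x ≠ 0 := by
    apply (finrank_pos_iff_exists_ne_zero (R := 𝕜)).mp
    have := K.finrank_add_finrank_orthogonal
    omega
  have horth {z : E} (hz : z ∈ ({u, v} : Finset E)) : ⟪z, (x : E)⟫_𝕜 = 0 :=
    K.inner_right_of_mem_orthogonal (Submodule.subset_span hz) x.2
  refine ⟨(‖(x : E)‖⁻¹ : 𝕜) • (x : E), norm_smul_inv_norm (by simpa using hx), ?_, ?_⟩ <;>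
    rw [inner_smul_right, horth (by simp), mul_zero]

lemma exists_inner_eq_zero_inner_ne_zero {n p q : E} (hp : ‖p‖ = 1) (hq : ‖q‖ = 1)
    (hpq : ‖⟪q, p⟫_𝕜‖ < 1) (hpn : ⟪p, n⟫_𝕜 = 0) (hqn : ⟪q, n⟫_𝕜 = 0) :
    ∃ e : E, ‖e‖ = 1 ∧ ⟪e, n⟫_𝕜 = 0 ∧ ⟪q, e⟫_𝕜 = 0 ∧ ⟪p, e⟫_𝕜 ≠ 0 := by
  set d := p - ⟪q, p⟫_𝕜 • q
  have hd : ‖d‖ ^ 2 = 1 - ‖⟪q, p⟫_𝕜‖ ^ 2 := by rw [norm_sub_inner_smul_sq 𝕜 hq, hp, one_pow]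
  have hd0 : d ≠ 0 := by
    intro h0
    rw [h0, norm_zero] at hd
    nlinarith [norm_nonneg ⟪q, p⟫_𝕜]
  have hpd : ⟪p, d⟫_𝕜 = (‖d‖ ^ 2 : ℝ) := by
    rw [hd, inner_sub_right, inner_smul_right, inner_self_eq_one_of_norm_eq_one hp,
      ← inner_conj_symm q p, RCLike.conj_mul, RCLike.norm_conj]
    push_cast
    ring
  refine ⟨(‖d‖⁻¹ : 𝕜) • d, norm_smul_inv_norm hd0, ?_, ?_, ?_⟩
  · simp [d, inner_smul_left, inner_sub_left, hpn, hqn]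
  · rw [inner_smul_right, inner_sub_inner_smul_eq_zero 𝕜 hq, mul_zero]
  · rw [inner_smul_right, hpd]
    simpa using hd0

lemma exists_linearIsometryEquiv_apply_eq_of_inner_eq [FiniteDimensional 𝕜 E] {p x y : E}
    (hp : ‖p‖ = 1) (hxy : ‖x‖ = ‖y‖) (h : ⟪p, x⟫_𝕜 = ⟪p, y⟫_𝕜) :
    ∃ g : E ≃ₗᵢ[𝕜] E, g p = p ∧ g x = y := by
  have hx'y' : ‖x - ⟪p, x⟫_𝕜 • p‖ = ‖y - ⟪p, y⟫_𝕜 • p‖ := by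
    rw [← sq_eq_sq₀ (norm_nonneg _) (norm_nonneg _), norm_sub_inner_smul_sq 𝕜 hp,
      norm_sub_inner_smul_sq 𝕜 hp, h, hxy]
  have hpx' := inner_sub_inner_smul_eq_zero 𝕜 hp x
  have hpy' := inner_sub_inner_smul_eq_zero 𝕜 hp y
  have hx : x = ⟪p, x⟫_𝕜 • p + (x - ⟪p, x⟫_𝕜 • p) := by abel
  have hy : y = ⟪p, x⟫_𝕜 • p + (y - ⟪p, y⟫_𝕜 • p) := by rw [h]; abel
  set x' := x - ⟪p, x⟫_𝕜 • p
  set y' := y - ⟪p, y⟫_𝕜 • p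
  by_cases hx' : x' = 0
  · have hy' : y' = 0 := norm_eq_zero.mp (hx'y' ▸ norm_eq_zero.mpr hx')
    exact ⟨1, rfl, by rw [hx, hy, hx', hy']; rfl⟩
  have hy' : y' ≠ 0 := norm_ne_zero_iff.mp (hx'y' ▸ norm_ne_zero_iff.mpr hx')
  have hox : Orthonormal 𝕜 ![p, (‖x'‖⁻¹ : 𝕜) • x'] := by
    simp [hp, norm_smul_inv_norm hx', inner_smul_right, hpx']
  have hoy : Orthonormal 𝕜 ![p, (‖y'‖⁻¹ : 𝕜) • y'] := by
    simp [hp, norm_smul_inv_norm hy', inner_smul_right, hpy']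
  obtain ⟨g, hg⟩ := hox.exists_linearIsometryEquiv_apply_eq hoy
  have hgp : g p = p := hg 0
  have hgx' : g ((‖x'‖⁻¹ : 𝕜) • x') = (‖y'‖⁻¹ : 𝕜) • y' := hg 1
  have hgx'' : g x' = y' := by
    rw [map_smul, ← hx'y'] at hgx'
    exact smul_right_injective E (by simpa using hx') hgx'
  exact ⟨g, hgp, by rw [hx, hy, map_add, map_smul, hgp, hgx'']⟩

noncomputable def hemispherePoint (n e : E) (t : 𝕜) : E := t • e + (√(1 - ‖t‖ ^ 2) : 𝕜) • n

section hemispherePoint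

variable {n e : E}

lemma norm_hemispherePoint (hn : ‖n‖ = 1) (he : ‖e‖ = 1) (hen : ⟪e, n⟫_𝕜 = 0) {t : 𝕜}
    (ht : ‖t‖ ≤ 1) : ‖hemispherePoint n e t‖ = 1 := by
  refine (pow_eq_one_iff_of_nonneg (norm_nonneg _) two_ne_zero).mp ?_
  rw [hemispherePoint, @norm_add_sq 𝕜, inner_smul_left, inner_smul_right, hen, norm_smul,
    norm_smul, he, hn, RCLike.norm_ofReal, abs_of_nonneg (Real.sqrt_nonneg _)]
  have ht' : 0 ≤ 1 - ‖t‖ ^ 2 := by nlinarith [norm_nonneg t]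
  simp only [mul_zero, mul_one, map_zero, Real.sq_sqrt ht']
  ring

lemma inner_hemispherePoint {z : E} (hz : ⟪z, n⟫_𝕜 = 0) (t : 𝕜) :
    ⟪z, hemispherePoint n e t⟫_𝕜 = t * ⟪z, e⟫_𝕜 := by
  simp [hemispherePoint, inner_add_right, inner_smul_right, hz]

@[simp] lemma hemispherePoint_zero : hemispherePoint n e (0 : 𝕜) = n := by
  simp [hemispherePoint]

@[simp] lemma hemispherePoint_one : hemispherePoint n e (1 : 𝕜) = e := by
  simp [hemispherePoint]

end hemispherePoint

section orbit

variable [FiniteDimensional 𝕜 E] {H : Subgroup (E ≃ₗᵢ[𝕜] E)} {n p q e : E}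

lemma orbit_eq_of_inner_eq {x y : E} (hpH : stabilizer (E ≃ₗᵢ[𝕜] E) p ≤ H) (hp : ‖p‖ = 1)
    (hxy : ‖x‖ = ‖y‖) (h : ⟪p, x⟫_𝕜 = ⟪p, y⟫_𝕜) : orbit H x = orbit H y := by
  obtain ⟨g, hgp, hgx⟩ := exists_linearIsometryEquiv_apply_eq_of_inner_eq hp hxy h
  exact (orbit_eq_iff.mpr ⟨⟨g, hpH hgp⟩, hgx⟩).symm

lemma orbit_hemispherePoint_eq_orbit_hemispherePoint (hqH : stabilizer (E ≃ₗᵢ[𝕜] E) q ≤ H)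
    (hn : ‖n‖ = 1) (hp : ‖p‖ = 1) (hq : ‖q‖ = 1) (hpn : ⟪p, n⟫_𝕜 = 0) (hqn : ⟪q, n⟫_𝕜 = 0)
    {c : 𝕜} (hc : ‖c‖ ≤ 1) :
    orbit H (hemispherePoint n p c) = orbit H (hemispherePoint n q (c * ⟪q, p⟫_𝕜)) := by
  have hqp : ‖⟪q, p⟫_𝕜‖ ≤ 1 := by simpa [hp, hq] using norm_inner_le_norm (𝕜 := 𝕜) q p
  refine orbit_eq_of_inner_eq hqH hq ?_ ?_
  · rw [norm_hemispherePoint hn hp hpn hc, norm_hemispherePoint hn hq hqn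
      (by rw [norm_mul]; exact mul_le_one₀ hc (norm_nonneg _) hqp)]
  · rw [inner_hemispherePoint hqn, inner_hemispherePoint hqn,
      inner_self_eq_one_of_norm_eq_one hq, mul_one]

lemma orbit_hemispherePoint_eq_orbit_of_norm_le_norm_inner (hpH : stabilizer (E ≃ₗᵢ[𝕜] E) p ≤ H)
    (hqH : stabilizer (E ≃ₗᵢ[𝕜] E) q ≤ H) (hn : ‖n‖ = 1) (hp : ‖p‖ = 1) (hq : ‖q‖ = 1)
    (he : ‖e‖ = 1) (hpn : ⟪p, n⟫_𝕜 = 0) (hqn : ⟪q, n⟫_𝕜 = 0) (hen : ⟪e, n⟫_𝕜 = 0)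
    (hqe : ⟪q, e⟫_𝕜 = 0) {c : 𝕜} (hc : ‖c‖ ≤ ‖⟪p, e⟫_𝕜‖) :
    orbit H (hemispherePoint n p c) = orbit H n := by
  have hpe : ‖⟪p, e⟫_𝕜‖ ≤ 1 := by simpa [hp, he] using norm_inner_le_norm (𝕜 := 𝕜) p e
  have ht : ‖c / ⟪p, e⟫_𝕜‖ ≤ 1 := by
    rw [norm_div]
    exact div_le_one_of_le₀ hc (norm_nonneg _)
  have htc : c / ⟪p, e⟫_𝕜 * ⟪p, e⟫_𝕜 = c := by
    by_cases h0 : ⟪p, e⟫_𝕜 = 0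
    · simp_all -- then `c = 0`, and `0 / 0 * 0 = 0`
    · exact div_mul_cancel₀ c h0
  calc orbit H (hemispherePoint n p c)
      = orbit H (hemispherePoint n e (c / ⟪p, e⟫_𝕜)) := by
        refine orbit_eq_of_inner_eq hpH hp ?_ ?_
        · rw [norm_hemispherePoint hn hp hpn (hc.trans hpe), norm_hemispherePoint hn he hen ht]
        · rw [inner_hemispherePoint hpn, inner_hemispherePoint hpn,
            inner_self_eq_one_of_norm_eq_one hp, mul_one, htc]
    _ = orbit H (hemispherePoint n e (0 : 𝕜)) := by
        refine orbit_eq_of_inner_eq hqH hq ?_ ?_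
        · rw [norm_hemispherePoint hn he hen ht, norm_hemispherePoint hn he hen (by simp)]
        · rw [inner_hemispherePoint hqn, inner_hemispherePoint hqn, hqe, mul_zero, mul_zero]
    _ = orbit H n := by rw [hemispherePoint_zero]

lemma orbit_hemispherePoint_eq_orbit (hpH : stabilizer (E ≃ₗᵢ[𝕜] E) p ≤ H)
    (hqH : stabilizer (E ≃ₗᵢ[𝕜] E) q ≤ H) (hn : ‖n‖ = 1) (hp : ‖p‖ = 1) (hq : ‖q‖ = 1)
    (hpn : ⟪p, n⟫_𝕜 = 0) (hqn : ⟪q, n⟫_𝕜 = 0) (hpq : ‖⟪q, p⟫_𝕜‖ < 1) {c : 𝕜} (hc : ‖c‖ ≤ 1) :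
    orbit H (hemispherePoint n p c) = orbit H n := by
  obtain ⟨e, he, hen, hqe, hpe⟩ := exists_inner_eq_zero_inner_ne_zero hp hq hpq hpn hqn
  set m := ⟪q, p⟫_𝕜 * ⟪p, q⟫_𝕜
  have hm : ‖m‖ < 1 := by
    rw [norm_mul, norm_inner_symm p q]
    exact mul_lt_one_of_nonneg_of_lt_one_left (norm_nonneg _) hpq hpq.le
  have descent (k : ℕ) : ∀ c : 𝕜, ‖c‖ ≤ 1 → ‖c‖ * ‖m‖ ^ k ≤ ‖⟪p, e⟫_𝕜‖ →
      orbit H (hemispherePoint n p c) = orbit H n := by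
    induction k with
    | zero =>
      intro c _ hc
      exact orbit_hemispherePoint_eq_orbit_of_norm_le_norm_inner hpH hqH hn hp hq he hpn hqn
        hen hqe (by simpa using hc)
    | succ k ih =>
      intro c hc hck
      have hcq : ‖c * ⟪q, p⟫_𝕜‖ ≤ 1 := by
        rw [norm_mul]
        exact mul_le_one₀ hc (norm_nonneg _) hpq.le
      rw [orbit_hemispherePoint_eq_orbit_hemispherePoint hqH hn hp hq hpn hqn hc,
        orbit_hemispherePoint_eq_orbit_hemispherePoint hpH hn hq hp hqn hpn hcq, mul_assoc]
      refine ih _ ?_ ?_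
      · rw [norm_mul]
        exact mul_le_one₀ hc (norm_nonneg _) hm.le
      · rwa [norm_mul, mul_assoc, ← pow_succ']
  obtain ⟨k, hk⟩ := exists_pow_lt_of_lt_one (norm_pos_iff.mpr hpe) hm
  exact descent k c hc ((mul_le_of_le_one_left (by positivity) hc).trans hk.le)

end orbit

theorem mem_orbit_sup_stabilizer [FiniteDimensional 𝕜 E] (hE : 2 < finrank 𝕜 E) {u v w : E}
    (hu : ‖u‖ = 1) (hv : ‖v‖ = 1) (hw : ‖w‖ = 1) (huv : ‖⟪v, u⟫_𝕜‖ < 1) :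
    w ∈ orbit ↥(stabilizer (E ≃ₗᵢ[𝕜] E) u ⊔ stabilizer (E ≃ₗᵢ[𝕜] E) v) u := by
  set H := stabilizer (E ≃ₗᵢ[𝕜] E) u ⊔ stabilizer (E ≃ₗᵢ[𝕜] E) v
  obtain ⟨n, hn, hun, hvn⟩ := exists_norm_eq_one_inner_eq_zero hE u v
  have horbit {c : 𝕜} (hc : ‖c‖ ≤ 1) : orbit H (hemispherePoint n u c) = orbit H n :=
    orbit_hemispherePoint_eq_orbit le_sup_left le_sup_right hn hu hv hun hvn huv hc
  have huw : ‖⟪u, w⟫_𝕜‖ ≤ 1 := by simpa [hu, hw] using norm_inner_le_norm (𝕜 := 𝕜) u w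
  have hw' : orbit H w = orbit H (hemispherePoint n u ⟪u, w⟫_𝕜) := by
    refine orbit_eq_of_inner_eq le_sup_left hu ?_ ?_
    · rw [hw, norm_hemispherePoint hn hu hun huw]
    · rw [inner_hemispherePoint hun, inner_self_eq_one_of_norm_eq_one hu, mul_one]
  rw [← orbit_eq_iff, hw', horbit huw, ← horbit (c := 1) (by simp), hemispherePoint_one]

theorem stmt_1_general {𝕜 : Type} [RCLike 𝕜] (u v w : EuclideanSpace 𝕜 (Fin 3))
    (hu : ‖u‖ = 1) (hv : ‖v‖ = 1) (hw : ‖w‖ = 1)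
    (h1 : ¬ ∃ c : 𝕜, u = c • v) :
    ∃ L : List (EuclideanSpace 𝕜 (Fin 3) ≃ₗᵢ[𝕜] EuclideanSpace 𝕜 (Fin 3)),
      (∀ f ∈ L, f u = u ∨ f v = v) ∧ L.foldr (fun f x => f x) u = w := by
  obtain ⟨⟨g, hg⟩, rfl⟩ := mem_orbit_sup_stabilizer (by simp) hu hv hw
    (norm_inner_lt_one_of_not_exists_smul hu hv h1)
  obtain ⟨L, hL, rfl⟩ := Subgroup.exists_list_of_mem_sup hg
  exact ⟨L, hL, (LinearIsometryEquiv.list_prod_apply L u).symm⟩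

/-- For unit vectors `u, v, w` in `F³` (`F = ℝ` or `ℂ`) with `u, v` not parallel, there is a
finite composition of linear isometric automorphisms of `F³`, each fixing `u` or `v`,
taking `u` to `w`. -/
theorem stmt_1 {𝕜 : Type} [RCLike 𝕜] (u v w : EuclideanSpace 𝕜 (Fin 3))
    (hu : ‖u‖ = 1) (hv : ‖v‖ = 1) (hw : ‖w‖ = 1)
    (h1 : ¬ ∃ c : 𝕜, u = c • v) (h2 : ¬ ∃ c : 𝕜, v = c • u) :
    ∃ L : List (EuclideanSpace 𝕜 (Fin 3) ≃ₗᵢ[𝕜] EuclideanSpace 𝕜 (Fin 3)),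
      (∀ f ∈ L, f u = u ∨ f v = v) ∧ L.foldr (fun f x => f x) u = w :=
  stmt_1_general u v w hu hv hw h1
end

section
/- Let U : Hilbr → Set preserve directed colimits, let f : A → B be a linear isometric isomorphism of infinite-dimensional Hilbert spaces, and let x ∈ U(A). Then f(supp_A(x)) = supp_B(U(f)(x)), where supp denotes the unique minimal finite-dimensional support subspace. -/
open CategoryTheory CategoryTheory.Limits

/-- The category `Hilbr` of Hilbert spaces over `𝕜` (`ℝ` or `ℂ`) and linear isometric
embeddings. -/
structure HilbCat (𝕜 : Type) [RCLike 𝕜] : Type 1 where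
  carrier : Type
  [nacg : NormedAddCommGroup carrier]
  [ips : InnerProductSpace 𝕜 carrier]
  [cs : CompleteSpace carrier]

attribute [instance] HilbCat.nacg HilbCat.ips HilbCat.cs

variable {𝕜 : Type} [RCLike 𝕜]

instance : Category (HilbCat 𝕜) where
  Hom A B := A.carrier →ₗᵢ[𝕜] B.carrier
  id A := LinearIsometry.id
  comp f g := g.comp f
  id_comp f := rfl
  comp_id f := rfl
  assoc f g h := rfl

/-- View a morphism of `HilbCat` as a linear isometry. -/
def homFn {A B : HilbCat 𝕜} (f : A ⟶ B) : A.carrier →ₗᵢ[𝕜] B.carrier := f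

/-- View a linear isometry as a morphism of `HilbCat`. -/
def toHom {A B : HilbCat 𝕜} (f : A.carrier →ₗᵢ[𝕜] B.carrier) : A ⟶ B := f

/-- A functor preserves directed colimits if it preserves colimits of shape `J` for every
nonempty directed preorder `J`. -/
def PreservesDirectedColimits {C : Type*} [Category C] (U : C ⥤ Type) : Prop :=
  ∀ (J : Type) [Preorder J] [IsDirected J (· ≤ ·)] [Nonempty J],
    Nonempty (PreservesColimitsOfShape J U)

/-- `x ∈ U(A)` is supported on the subspace `A₀ ⊆ A` if any two morphisms out of `A`
agreeing on `A₀` are equalized by `x`. -/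
def SuppOn (U : HilbCat 𝕜 ⥤ Type) (A : HilbCat 𝕜) (A₀ : Submodule 𝕜 A.carrier)
    (x : U.obj A) : Prop :=
  ∀ (B : HilbCat 𝕜) (f g : A ⟶ B), (∀ a ∈ A₀, homFn f a = homFn g a) →
    U.map f x = U.map g x

/-- The Hilbert space `ℓ²(X)` as an object of `HilbCat`. -/
noncomputable def lpObj (𝕜 : Type) [RCLike 𝕜] (X : Type) : HilbCat 𝕜 :=
  ⟨lp (fun _ : X => 𝕜) 2⟩

/-- `A` has Hilbert dimension `c`: it admits an orthonormal (Hilbert) basis indexed by a type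
of cardinality `c`. -/
def HasHilbertDim (A : HilbCat 𝕜) (c : Cardinal) : Prop :=
  ∃ (ι : Type) (_ : HilbertBasis ι 𝕜 A.carrier), Cardinal.mk ι = c

/-- `A` has Hilbert dimension `≥ c`. -/
def HasHilbertDimGE (A : HilbCat 𝕜) (c : Cardinal) : Prop :=
  ∃ (ι : Type) (_ : HilbertBasis ι 𝕜 A.carrier), c ≤ Cardinal.mk ι

/-- For a linear isometric isomorphism `f : A ≅ B` of infinite-dimensional Hilbert spaces and
`x ∈ U(A)`, the image under `f` of the minimal support of `x` in `A` is the minimal support of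
`U(f)(x)` in `B`. -/
theorem stmt_9 (U : HilbCat 𝕜 ⥤ Type) (hU : PreservesDirectedColimits U)
    (A B : HilbCat 𝕜)
    (hA : ¬ FiniteDimensional 𝕜 A.carrier) (hB : ¬ FiniteDimensional 𝕜 B.carrier)
    (e : A.carrier ≃ₗᵢ[𝕜] B.carrier) (x : U.obj A)
    (S : Submodule 𝕜 A.carrier) (T : Submodule 𝕜 B.carrier)
    (hSfin : FiniteDimensional 𝕜 S) (hSsupp : SuppOn U A S x)
    (hSmin : ∀ S' : Submodule 𝕜 A.carrier, FiniteDimensional 𝕜 S' → SuppOn U A S' x → S ≤ S')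
    (hTfin : FiniteDimensional 𝕜 T)
    (hTsupp : SuppOn U B T (U.map (toHom e.toLinearIsometry) x))
    (hTmin : ∀ T' : Submodule 𝕜 B.carrier, FiniteDimensional 𝕜 T' →
      SuppOn U B T' (U.map (toHom e.toLinearIsometry) x) → T ≤ T') :
    S.map (e.toLinearEquiv : A.carrier →ₗ[𝕜] B.carrier) = T := by

  classical
  set f : A ⟶ B := toHom e.toLinearIsometry with hf
  set finv : B ⟶ A := toHom e.symm.toLinearIsometry with hfinv
  have hcomp : f ≫ finv = 𝟙 A := by
    apply LinearIsometry.ext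
    intro a
    simp [f, finv, toHom, CategoryStruct.comp, CategoryStruct.id,
      LinearIsometry.comp_apply]
  have hxx : U.map finv (U.map f x) = x := by
    have := congrArg (fun g => U.map g x) hcomp
    simpa [FunctorToTypes.map_comp_apply] using this
  -- S.map e is a support for U.map f x
  have hmapSupp : SuppOn U B (S.map (e.toLinearEquiv : A.carrier →ₗ[𝕜] B.carrier))
      (U.map f x) := by
    intro C g h hgh
    have : U.map (f ≫ g) x = U.map (f ≫ h) x := by
      apply hSsupp
      intro a ha
      have := hgh (e a) ⟨a, ha, rfl⟩
      simpa [homFn, f, toHom, CategoryStruct.comp, LinearIsometry.comp_apply] using this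
    simpa [FunctorToTypes.map_comp_apply] using this
  -- T.map e.symm is a support for x
  have hmapSupp' : SuppOn U A (T.map (e.symm.toLinearEquiv : B.carrier →ₗ[𝕜] A.carrier)) x := by
    intro C g h hgh
    have : U.map (finv ≫ g) (U.map f x) = U.map (finv ≫ h) (U.map f x) := by
      apply hTsupp
      intro b hb
      have := hgh (e.symm b) ⟨b, hb, rfl⟩
      simpa [homFn, finv, toHom, CategoryStruct.comp, LinearIsometry.comp_apply] using this
    simpa [FunctorToTypes.map_comp_apply, hxx] using this
  have finS : FiniteDimensional 𝕜 (S.map (e.toLinearEquiv : A.carrier →ₗ[𝕜] B.carrier)) :=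
    Module.Finite.map S _
  have finT : FiniteDimensional 𝕜 (T.map (e.symm.toLinearEquiv : B.carrier →ₗ[𝕜] A.carrier)) :=
    Module.Finite.map T _
  apply le_antisymm
  · have hle : S ≤ T.map (e.symm.toLinearEquiv : B.carrier →ₗ[𝕜] A.carrier) :=
      hSmin _ finT hmapSupp'
    have := Submodule.map_mono (f := (e.toLinearEquiv : A.carrier →ₗ[𝕜] B.carrier)) hle
    have heq : Submodule.map ((e.toLinearEquiv : A.carrier →ₗ[𝕜] B.carrier))
        (Submodule.map ((e.symm.toLinearEquiv : B.carrier →ₗ[𝕜] A.carrier)) T) = T := by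
      ext b
      simp [Submodule.mem_map]
    rwa [heq] at this
  · exact hTmin _ finS hmapSupp
end

section
/- Let U : Hilbr → Set preserve directed colimits, and suppose λ₀ is a cardinal with 2^{ℵ₀} ≤ λ₀ and |U(Fⁿ)| ≤ λ₀ for all n ∈ ℕ. Then for every cardinal λ ≥ λ₀, |U(ℓ²(λ))| ≤ λ. -/
/-!
`ℓ²(X)` is the directed colimit, in `HilbCat`, of its subspaces spanned by finitely many basis
vectors: compatible isometries out of these subspaces glue to an isometry on their union, which
is dense, so it extends uniquely to all of `ℓ²(X)`. As `U` preserves this colimit, `U(ℓ²(X))` is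
covered by the images of the `U(ℓ²(S))`, `S ⊆ X` finite, each isomorphic to some `U(𝕜ⁿ)`. Since
`λ ≥ 2^ℵ₀` is infinite, `|U(ℓ²(X))| ≤ |Finset X| · λ₀ = λ · λ₀ = λ`.
-/

open CategoryTheory CategoryTheory.Limits

variable {𝕜 : Type} [RCLike 𝕜]

/-- The Euclidean space `𝕜ⁿ` as an object of `HilbCat`. -/
noncomputable def euclObj (𝕜 : Type) [RCLike 𝕜] (n : ℕ) : HilbCat 𝕜 :=
  ⟨EuclideanSpace 𝕜 (Fin n)⟩

namespace Submodule

section Linear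

variable {R M N : Type*} [Semiring R] [AddCommMonoid M] [Module R M] [AddCommMonoid N]
  [Module R N] {ι : Type*} [Preorder ι] [IsDirectedOrder ι] {K : ι → Submodule R M}

theorem exists_mem_of_mem_iSup_of_monotone [Nonempty ι] (hK : Monotone K) {x : M}
    (hx : x ∈ ⨆ i, K i) : ∃ i, x ∈ K i :=
  (mem_iSup_of_directed K hK.directed_le).mp hx

theorem apply_eq_of_compatible {hK : Monotone K} {f : ∀ i, K i →ₗ[R] N}
    (hf : ∀ ⦃i j⦄ (h : i ≤ j) (x : K i), f j (inclusion (hK h) x) = f i x)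
    {i j : ι} {x : M} (hi : x ∈ K i) (hj : x ∈ K j) : f i ⟨x, hi⟩ = f j ⟨x, hj⟩ := by
  obtain ⟨k, hik, hjk⟩ := exists_ge_ge i j
  rw [← hf hik, ← hf hjk]
  rfl

noncomputable def iSupLift [Nonempty ι] (hK : Monotone K) (f : ∀ i, K i →ₗ[R] N)
    (hf : ∀ ⦃i j⦄ (h : i ≤ j) (x : K i), f j (inclusion (hK h) x) = f i x) :
    ↥(⨆ i, K i) →ₗ[R] N where
  toFun x := f _ ⟨x, (exists_mem_of_mem_iSup_of_monotone hK x.2).choose_spec⟩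
  map_add' x y := by
    obtain ⟨k, hxk, hyk⟩ := exists_ge_ge (exists_mem_of_mem_iSup_of_monotone hK x.2).choose
      (exists_mem_of_mem_iSup_of_monotone hK y.2).choose
    have hx := hK hxk (exists_mem_of_mem_iSup_of_monotone hK x.2).choose_spec
    have hy := hK hyk (exists_mem_of_mem_iSup_of_monotone hK y.2).choose_spec
    have hxy : ((x + y : ↥(⨆ i, K i)) : M) ∈ K k := add_mem hx hy
    rw [apply_eq_of_compatible hf _ hxy, apply_eq_of_compatible hf _ hx,
      apply_eq_of_compatible hf _ hy, ← map_add]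
    rfl
  map_smul' r x := by
    obtain ⟨i, hi⟩ := exists_mem_of_mem_iSup_of_monotone hK x.2
    have hrx : ((r • x : ↥(⨆ i, K i)) : M) ∈ K i := smul_mem _ r hi
    rw [apply_eq_of_compatible hf _ hrx, apply_eq_of_compatible hf _ hi, RingHom.id_apply,
      ← map_smul]
    rfl

theorem iSupLift_apply [Nonempty ι] {hK : Monotone K} {f : ∀ i, K i →ₗ[R] N}
    (hf : ∀ ⦃i j⦄ (h : i ≤ j) (x : K i), f j (inclusion (hK h) x) = f i x)
    {i : ι} {x : M} (hx : x ∈ K i) :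
    iSupLift hK f hf ⟨x, mem_iSup_of_mem i hx⟩ = f i ⟨x, hx⟩ :=
  apply_eq_of_compatible hf _ hx

end Linear

section Isometric

variable {𝕜' E F : Type*} [NormedField 𝕜'] [NormedAddCommGroup E] [NormedSpace 𝕜' E]
  [NormedAddCommGroup F] [NormedSpace 𝕜' F] {ι : Type*} [Preorder ι] [IsDirectedOrder ι]
  [Nonempty ι] {K : ι → Submodule 𝕜' E}

noncomputable def iSupLiftₗᵢ (hK : Monotone K) (f : ∀ i, K i →ₗᵢ[𝕜'] F)
    (hf : ∀ ⦃i j⦄ (h : i ≤ j) (x : K i), f j (inclusion (hK h) x) = f i x) :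
    ↥(⨆ i, K i) →ₗᵢ[𝕜'] F where
  toLinearMap := iSupLift hK (fun i => (f i).toLinearMap) hf
  norm_map' x := by
    obtain ⟨i, hi⟩ := exists_mem_of_mem_iSup_of_monotone hK x.2
    rw [show x = ⟨x, mem_iSup_of_mem i hi⟩ from rfl,
      iSupLift_apply (f := fun i => (f i).toLinearMap) hf hi]
    exact (f i).norm_map _

theorem iSupLiftₗᵢ_apply {hK : Monotone K} {f : ∀ i, K i →ₗᵢ[𝕜'] F}
    (hf : ∀ ⦃i j⦄ (h : i ≤ j) (x : K i), f j (inclusion (hK h) x) = f i x)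
    {i : ι} {x : E} (hx : x ∈ K i) :
    iSupLiftₗᵢ hK f hf ⟨x, mem_iSup_of_mem i hx⟩ = f i ⟨x, hx⟩ :=
  iSupLift_apply (f := fun i => (f i).toLinearMap) hf hx

end Isometric

end Submodule

namespace LinearIsometry

variable {𝕜' E F : Type*} [NontriviallyNormedField 𝕜'] [NormedAddCommGroup E]
  [NormedSpace 𝕜' E] [NormedAddCommGroup F] [NormedSpace 𝕜' F] [CompleteSpace F]
  {W : Submodule 𝕜' E}

theorem extend_subtypeL_apply (hW : Dense (W : Set E)) (f : W →ₗᵢ[𝕜'] F) (x : W) :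
    f.toContinuousLinearMap.extend W.subtypeL x = f x :=
  ContinuousLinearMap.extend_eq _ (by simpa [DenseRange] using hW)
    isometry_subtype_coe.isUniformInducing x

theorem norm_extend_subtypeL_apply (hW : Dense (W : Set E)) (f : W →ₗᵢ[𝕜'] F) (x : E) :
    ‖f.toContinuousLinearMap.extend W.subtypeL x‖ = ‖x‖ := by
  refine isClosed_property (e := W.subtypeL) (p := fun x => ‖_‖ = ‖x‖)
    (by simpa [DenseRange] using hW) ?_ (fun w => ?_) x
  · exact isClosed_eq (ContinuousLinearMap.continuous _).norm continuous_norm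
  · simp only [extend_subtypeL_apply hW, Submodule.subtypeL_apply, LinearIsometry.norm_map]
    rfl

noncomputable def extendOfDense (hW : Dense (W : Set E)) (f : W →ₗᵢ[𝕜'] F) :
    E →ₗᵢ[𝕜'] F :=
  ⟨(f.toContinuousLinearMap.extend W.subtypeL).toLinearMap, norm_extend_subtypeL_apply hW f⟩

theorem extendOfDense_apply (hW : Dense (W : Set E)) (f : W →ₗᵢ[𝕜'] F) (x : W) :
    f.extendOfDense hW x = f x :=
  extend_subtypeL_apply hW f x

end LinearIsometry

section SubspaceDiagram

variable {A : HilbCat 𝕜} {J : Type} [Preorder J] {V : J → Submodule 𝕜 A.carrier}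
  [∀ j, CompleteSpace (V j)] (hV : Monotone V)

noncomputable def subspaceDiagram : J ⥤ HilbCat 𝕜 where
  obj j := ⟨V j⟩
  map f := toHom ⟨Submodule.inclusion (hV (leOfHom f)), fun _ => rfl⟩

noncomputable def subspaceCocone : Cocone (subspaceDiagram hV) where
  pt := A
  ι := { app j := toHom (V j).subtypeₗᵢ }

variable [IsDirectedOrder J] [Nonempty J]
  (hdense : Dense ((⨆ j, V j : Submodule 𝕜 A.carrier) : Set A.carrier))

noncomputable def subspaceCoconeDesc (s : Cocone (subspaceDiagram hV)) :
    A.carrier →ₗᵢ[𝕜] s.pt.carrier :=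
  (Submodule.iSupLiftₗᵢ (F := s.pt.carrier) hV (fun j => homFn (s.ι.app j))
    (fun _ _ h x => congrArg (fun g => homFn g x) (s.w (homOfLE h)))).extendOfDense hdense

theorem subspaceCoconeDesc_apply (s : Cocone (subspaceDiagram hV)) {j : J} {x : A.carrier}
    (hx : x ∈ V j) :
    subspaceCoconeDesc hV hdense s x = homFn (s.ι.app j) (⟨x, hx⟩ : V j) :=
  (LinearIsometry.extendOfDense_apply hdense _ ⟨x, Submodule.mem_iSup_of_mem j hx⟩).trans
    (Submodule.iSupLiftₗᵢ_apply _ hx)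

noncomputable def subspaceCoconeIsColimit : IsColimit (subspaceCocone hV) where
  desc s := toHom (subspaceCoconeDesc hV hdense s)
  fac s j := LinearIsometry.ext fun x => subspaceCoconeDesc_apply hV hdense s x.2
  uniq s m hm := LinearIsometry.ext <| congrFun <|
    (homFn m).continuous.ext_on hdense (subspaceCoconeDesc hV hdense s).continuous fun v hv => by
      obtain ⟨j, hj⟩ := Submodule.exists_mem_of_mem_iSup_of_monotone hV hv
      exact (congrArg (fun g => homFn g (⟨v, hj⟩ : V j)) (hm j)).trans
        (subspaceCoconeDesc_apply hV hdense s hj).symm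

end SubspaceDiagram

namespace HilbertBasis

variable {E : Type*} [NormedAddCommGroup E] [InnerProductSpace 𝕜 E] {ι : Type*}
  (b : HilbertBasis ι 𝕜 E)

def finsetSpan (S : Finset ι) : Submodule 𝕜 E :=
  Submodule.span 𝕜 (b '' S)

instance (S : Finset ι) : FiniteDimensional 𝕜 (b.finsetSpan S) :=
  FiniteDimensional.span_of_finite 𝕜 (S.finite_toSet.image _)

theorem finsetSpan_mono : Monotone b.finsetSpan := fun _ _ h =>
  Submodule.span_mono (Set.image_mono h)

theorem iSup_finsetSpan : ⨆ S, b.finsetSpan S = Submodule.span 𝕜 (Set.range b) := by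
  have hcover : ⋃ S : Finset ι, (S : Set ι) = Set.univ :=
    Set.iUnion_eq_univ_iff.mpr fun i => ⟨{i}, by simp⟩
  rw [← Set.image_univ, ← hcover, Set.image_iUnion, Submodule.span_iUnion]
  rfl

theorem dense_iSup_finsetSpan : Dense ((⨆ S, b.finsetSpan S : Submodule 𝕜 E) : Set E) := by
  rw [iSup_finsetSpan, Submodule.dense_iff_topologicalClosure_eq_top]
  exact b.dense_span

end HilbertBasis

theorem Cardinal.mk_le_sum_of_isColimit {J : Type} [SmallCategory J] {F : J ⥤ Type}
    {c : Cocone F} (hc : IsColimit c) : mk c.pt ≤ sum fun j => mk (F.obj j) := by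
  rw [← mk_sigma]
  refine mk_le_of_surjective (f := fun p : Σ j, F.obj j => c.ι.app p.1 p.2) fun x => ?_
  obtain ⟨j, y, hy⟩ := Types.jointly_surjective_of_isColimit hc x
  exact ⟨⟨j, y⟩, hy⟩

noncomputable def LinearIsometryEquiv.toHilbCatIso {A B : HilbCat 𝕜}
    (e : A.carrier ≃ₗᵢ[𝕜] B.carrier) : A ≅ B where
  hom := toHom e.toLinearIsometry
  inv := toHom e.symm.toLinearIsometry
  hom_inv_id := LinearIsometry.ext e.symm_apply_apply
  inv_hom_id := LinearIsometry.ext e.apply_symm_apply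

section CardinalBound

variable (U : HilbCat 𝕜 ⥤ Type) {κ : Cardinal}
  (hκ : ∀ n : ℕ, Cardinal.mk (U.obj (euclObj 𝕜 n)) ≤ κ)
include hκ

theorem mk_obj_le_of_finiteDimensional (A : HilbCat 𝕜) [FiniteDimensional 𝕜 A.carrier] :
    Cardinal.mk (U.obj A) ≤ κ :=
  (Cardinal.mk_congr (U.mapIso (stdOrthonormalBasis 𝕜 A.carrier).repr.toHilbCatIso).toEquiv
    ).le.trans (hκ _)

theorem mk_obj_le_of_hilbertBasis (hU : PreservesDirectedColimits U) {A : HilbCat 𝕜} {ι : Type}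
    (b : HilbertBasis ι 𝕜 A.carrier) :
    Cardinal.mk (U.obj A) ≤ Cardinal.mk (Finset ι) * κ := by
  classical
  obtain ⟨_⟩ := hU (Finset ι)
  have hcolim := isColimitOfPreserves U
    (subspaceCoconeIsColimit b.finsetSpan_mono b.dense_iSup_finsetSpan)
  calc Cardinal.mk (U.obj A)
      ≤ Cardinal.sum fun S => Cardinal.mk (U.obj ((subspaceDiagram b.finsetSpan_mono).obj S)) :=
        Cardinal.mk_le_sum_of_isColimit hcolim
    _ ≤ Cardinal.sum fun _ : Finset ι => κ :=
        Cardinal.sum_le_sum _ _ fun S => mk_obj_le_of_finiteDimensional U hκ ⟨b.finsetSpan S⟩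
    _ = Cardinal.mk (Finset ι) * κ := Cardinal.sum_const' _ _

end CardinalBound

/-- If `2^ℵ₀ ≤ λ₀` and `|U(𝕜ⁿ)| ≤ λ₀` for all `n`, then `|U(ℓ²(λ))| ≤ λ` for every
cardinal `λ ≥ λ₀`. -/
theorem stmt_11 (U : HilbCat 𝕜 ⥤ Type) (hU : PreservesDirectedColimits U)
    (lam0 : Cardinal) (h0 : 2 ^ Cardinal.aleph0 ≤ lam0)
    (hn : ∀ n : ℕ, Cardinal.mk (U.obj (euclObj 𝕜 n)) ≤ lam0) :
    ∀ (lam : Cardinal) (X : Type), lam0 ≤ lam → Cardinal.mk X = lam →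
      Cardinal.mk (U.obj (lpObj 𝕜 X)) ≤ lam := by
  intro lam X hlam hX
  have hinf : Cardinal.aleph0 ≤ lam := (Cardinal.cantor _).le.trans (h0.trans hlam)
  have : Infinite X := Cardinal.infinite_iff.mpr (hX ▸ hinf)
  calc Cardinal.mk (U.obj (lpObj 𝕜 X))
      ≤ Cardinal.mk (Finset X) * lam0 :=
        mk_obj_le_of_hilbertBasis U hn hU (HilbertBasis.ofRepr (LinearIsometryEquiv.refl 𝕜 _))
    _ = lam * lam0 := by rw [Cardinal.mk_finset_of_infinite, hX]
    _ ≤ lam * lam := by gcongr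
    _ = lam := Cardinal.mul_eq_self hinf
end

section
/- Let U : Hilbr → Set preserve directed colimits. Then U maps every linear isometric embedding f : A → B with A infinite-dimensional to an injective function U(A) → U(B). -/
open CategoryTheory CategoryTheory.Limits

variable {𝕜 : Type} [RCLike 𝕜]

/-! Since `A` is the directed colimit of its finite-dimensional subspaces, every `x ∈ U(A)` is
supported on a finite-dimensional subspace `A₀ ⊆ A`. Likewise `B` is the directed colimit of the
closed subspaces `C = closure (range f + V)` with `V` finite-dimensional, so if `U f x = U f y`
then `x` and `y` already become equal in some `U(C)`. In such a `C` the orthogonal complement of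
`range f` is finite-dimensional, hence `A` and `C` have the same infinite Hilbert dimension and
some isometric isomorphism `u : A ≅ C` agrees with `f` on `A₀`. By the support property
`U u x = U f x = U f y = U u y`, and `U u` is bijective. -/

open Submodule

section InnerProductSpace

variable {E F : Type*} [NormedAddCommGroup E] [InnerProductSpace 𝕜 E]
  [NormedAddCommGroup F] [InnerProductSpace 𝕜 F]

theorem Submodule.orthogonal_inf_topologicalClosure_sup_le_map [CompleteSpace E]
    (K V : Submodule 𝕜 E) [FiniteDimensional 𝕜 V] :
    Kᗮ ⊓ (K ⊔ V).topologicalClosure ≤ V.map (Kᗮ.starProjection : E →ₗ[𝕜] E) := by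
  rintro x ⟨hxK, hx⟩
  have hmaps : Set.MapsTo Kᗮ.starProjection ((K ⊔ V : Submodule 𝕜 E) : Set E)
      (V.map (Kᗮ.starProjection : E →ₗ[𝕜] E)) := by
    intro y hy
    obtain ⟨k, hk, v, hv, rfl⟩ := mem_sup.1 hy
    refine ⟨v, hv, ?_⟩
    rw [map_add, starProjection_orthogonal_apply_eq_zero hk, zero_add]
    rfl
  have := map_mem_closure Kᗮ.starProjection.continuous
    (by rwa [← topologicalClosure_coe]) hmaps
  rwa [(V.map _).closed_of_finiteDimensional.closure_eq,
    starProjection_eq_self_iff.2 hxK] at this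

theorem Orthonormal.finite_of_subset {s : Set E} (hs : Orthonormal 𝕜 ((↑) : s → E))
    {V : Submodule 𝕜 E} [FiniteDimensional 𝕜 V] (hsV : s ⊆ V) : s.Finite :=
  Set.finite_coe_iff.1 <| LinearIndependent.finite (R := 𝕜)
    (f := fun x : s => (⟨x, hsV x.2⟩ : V)) (hs.linearIndependent.of_comp V.subtype)

theorem LinearIsometry.finiteDimensional_orthogonal_range_codRestrict [CompleteSpace F]
    (g : E →ₗᵢ[𝕜] F) (V : Submodule 𝕜 F) [FiniteDimensional 𝕜 V] {p : Submodule 𝕜 F}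
    (hp : p ≤ (LinearMap.range g.toLinearMap ⊔ V).topologicalClosure) (hg : ∀ a, g a ∈ p) :
    FiniteDimensional 𝕜 (LinearMap.range (g.toLinearMap.codRestrict p hg))ᗮ := by
  set K := (LinearMap.range (g.toLinearMap.codRestrict p hg))ᗮ
  have hK : K.map p.subtype ≤ (LinearMap.range g.toLinearMap)ᗮ ⊓
      (LinearMap.range g.toLinearMap ⊔ V).topologicalClosure := by
    rintro _ ⟨v, hv, rfl⟩
    refine ⟨?_, hp v.2⟩
    rintro _ ⟨a, rfl⟩
    exact hv _ (LinearMap.mem_range_self _ a)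
  have : FiniteDimensional 𝕜 (K.map p.subtype) :=
    finiteDimensional_of_le (hK.trans (orthogonal_inf_topologicalClosure_sup_le_map _ V))
  exact (K.equivMapOfInjective _ p.injective_subtype).symm.finiteDimensional

theorem HilbertBasis.infinite_of_not_finiteDimensional {ι : Type*} (b : HilbertBasis ι 𝕜 E)
    (hE : ¬ FiniteDimensional 𝕜 E) : Infinite ι := by
  by_contra h
  have : Fintype ι := @Fintype.ofFinite _ (not_infinite_iff_finite.1 h)
  exact hE b.toOrthonormalBasis.toBasis.finiteDimensional_of_finite

theorem HilbertBasis.mem_orthogonal_range_of_inner_eq_zero {ι : Type*}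
    (b : HilbertBasis ι 𝕜 E) (g : E →ₗᵢ[𝕜] F) {y : F} (hy : ∀ i, inner 𝕜 (g (b i)) y = 0) :
    y ∈ (LinearMap.range g.toLinearMap)ᗮ := by
  have h : (innerSL 𝕜 y).comp g.toContinuousLinearMap = 0 := by
    refine ContinuousLinearMap.ext_on (dense_iff_topologicalClosure_eq_top.2 b.dense_span) ?_
    rintro _ ⟨i, rfl⟩
    simpa using inner_eq_zero_symm.1 (hy i)
  rintro _ ⟨a, rfl⟩
  exact inner_eq_zero_symm.1 (DFunLike.congr_fun h a)

theorem HilbertBasis.exists_linearIsometryEquiv_apply [CompleteSpace F] {ι ι' : Type*}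
    (b : HilbertBasis ι 𝕜 E) (b' : HilbertBasis ι' 𝕜 F) (σ : ι ≃ ι') :
    ∃ u : E ≃ₗᵢ[𝕜] F, ∀ i, u (b i) = b' (σ i) := by
  classical
  have hsp : ⊤ ≤ (span 𝕜 (Set.range (b' ∘ σ))).topologicalClosure := by
    rw [Set.range_comp, σ.range_eq_univ, Set.image_univ, b'.dense_span]
  refine ⟨b.repr.trans (HilbertBasis.mk (b'.orthonormal.comp σ σ.injective) hsp).repr.symm,
    fun i => ?_⟩
  simp [HilbertBasis.repr_self]

/- Extend `s` to a Hilbert basis `w` of `E`, and `g '' w` to a Hilbert basis `w'` of `F`. The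
vectors of `w' \ g '' w` lie in `(range g)ᗮ`, so there are finitely many of them and `#w = #w'`;
a bijection `w ≃ w'` that extends `g` on the finite set `s` then gives `u`. -/
theorem LinearIsometry.exists_linearIsometryEquiv_eqOn_of_orthonormal [CompleteSpace E]
    [CompleteSpace F] (hE : ¬ FiniteDimensional 𝕜 E) (g : E →ₗᵢ[𝕜] F)
    [FiniteDimensional 𝕜 (LinearMap.range g.toLinearMap)ᗮ] {s : Set E} (hs : s.Finite)
    (hon : Orthonormal 𝕜 ((↑) : s → E)) : ∃ u : E ≃ₗᵢ[𝕜] F, Set.EqOn u g s := by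
  obtain ⟨w, b, hsw, hb⟩ := hon.exists_hilbertBasis_extension
  have hw : Infinite w := b.infinite_of_not_finiteDimensional hE
  have hgw : Orthonormal 𝕜 ((↑) : g '' w → F) := by
    have := ((hb ▸ b.orthonormal).comp_linearIsometry g).toSubtypeRange
    rwa [Set.range_comp, Subtype.range_coe] at this
  obtain ⟨w', b', hgw', hb'⟩ := hgw.exists_hilbertBasis_extension
  have hw' : Orthonormal 𝕜 ((↑) : w' → F) := hb' ▸ b'.orthonormal
  have hnew : (w' \ g '' w).Finite := by
    refine (hw'.comp _ (Set.inclusion_injective Set.sdiff_subset)).finite_of_subset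
      (V := (LinearMap.range g.toLinearMap)ᗮ) ?_
    rintro y ⟨hy, hyg⟩
    refine b.mem_orthogonal_range_of_inner_eq_zero g fun i => ?_
    rw [hb]
    refine hw'.inner_eq_zero (i := ⟨g i, hgw' (Set.mem_image_of_mem g i.2)⟩) (j := ⟨y, hy⟩) ?_
    rintro ⟨⟩
    exact hyg (Set.mem_image_of_mem g i.2)
  have : Infinite (g '' w) := (Equiv.Set.image g w g.injective).infinite_iff.1 hw
  have hcard : Cardinal.mk (g '' w) = Cardinal.mk w' := by
    rw [← Cardinal.mk_sdiff_add_mk hgw', Cardinal.add_eq_right (Cardinal.aleph0_le_mk _)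
      (hnew.lt_aleph0.le.trans (Cardinal.aleph0_le_mk _))]
  set s' : Set w := Subtype.val ⁻¹' s
  have hs' : Cardinal.mk s' < Cardinal.mk w :=
    (hs.preimage Subtype.val_injective.injOn).lt_aleph0.trans_le (Cardinal.aleph0_le_mk w)
  let gs : s' ↪ w' := ⟨fun i => ⟨g i, hgw' (Set.mem_image_of_mem g i.1.2)⟩,
    fun i j h => Subtype.ext (Subtype.ext (g.injective (congrArg Subtype.val h)))⟩
  obtain ⟨σ, hσ⟩ := Cardinal.extend_function_of_lt gs hs'
    ⟨(Equiv.Set.image g w g.injective).trans (Cardinal.eq.1 hcard).some⟩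
  obtain ⟨u, hu⟩ := b.exists_linearIsometryEquiv_apply b' σ
  refine ⟨u, fun a ha => ?_⟩
  have := hu ⟨a, hsw ha⟩
  rwa [hb, hb', hσ ⟨⟨a, hsw ha⟩, ha⟩] at this

theorem LinearIsometry.exists_linearIsometryEquiv_eqOn [CompleteSpace E] [CompleteSpace F]
    (hE : ¬ FiniteDimensional 𝕜 E) (g : E →ₗᵢ[𝕜] F)
    [FiniteDimensional 𝕜 (LinearMap.range g.toLinearMap)ᗮ] (E₀ : Submodule 𝕜 E)
    [FiniteDimensional 𝕜 E₀] : ∃ u : E ≃ₗᵢ[𝕜] F, ∀ a ∈ E₀, u a = g a := by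
  let v := E₀.subtype ∘ stdOrthonormalBasis 𝕜 E₀
  have hv : span 𝕜 (Set.range v) = E₀ := by
    rw [Set.range_comp, span_image, ← (stdOrthonormalBasis 𝕜 E₀).coe_toBasis,
      Module.Basis.span_eq, Submodule.map_top]
    exact E₀.range_subtype
  obtain ⟨u, hu⟩ := g.exists_linearIsometryEquiv_eqOn_of_orthonormal hE (Set.finite_range v)
    ((stdOrthonormalBasis 𝕜 E₀).orthonormal.comp_linearIsometry E₀.subtypeₗᵢ).toSubtypeRange
  exact ⟨u, fun a ha => LinearMap.eqOn_span (f := (u : E →ₗ[𝕜] F)) (g := g.toLinearMap) hu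
    (by rwa [hv])⟩

end InnerProductSpace

namespace HilbCat

variable {A B C : HilbCat 𝕜}

abbrev ofSubmodule (p : Submodule 𝕜 B.carrier) [CompleteSpace p] : HilbCat 𝕜 := ⟨p⟩

def codRestrict (f : A ⟶ B) (p : Submodule 𝕜 B.carrier) [CompleteSpace p]
    (h : ∀ a, homFn f a ∈ p) : A ⟶ ofSubmodule p :=
  toHom ⟨(homFn f).toLinearMap.codRestrict p h, (homFn f).norm_map⟩

def isoOfLinearIsometryEquiv (u : A.carrier ≃ₗᵢ[𝕜] C.carrier) : A ≅ C where
  hom := toHom u.toLinearIsometry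
  inv := toHom u.symm.toLinearIsometry
  hom_inv_id := LinearIsometry.ext u.symm_apply_apply
  inv_hom_id := LinearIsometry.ext u.apply_symm_apply

end HilbCat

open HilbCat

structure DirectedSubspaceCover (B : HilbCat 𝕜) where
  Mem : Submodule 𝕜 B.carrier → Prop
  completeSpace : ∀ p, Mem p → CompleteSpace p
  exists_ge : ∀ p q, Mem p → Mem q → ∃ r, Mem r ∧ p ≤ r ∧ q ≤ r
  exists_mem : ∀ b, ∃ p, Mem p ∧ b ∈ p

namespace DirectedSubspaceCover

variable {B : HilbCat 𝕜} (D : DirectedSubspaceCover B)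

abbrev Index : Type := {p : Submodule 𝕜 B.carrier // D.Mem p}

instance : IsDirected D.Index (· ≤ ·) where
  directed p q :=
    let ⟨r, hr, hpr, hqr⟩ := D.exists_ge p.1 q.1 p.2 q.2
    ⟨⟨r, hr⟩, hpr, hqr⟩

instance : Nonempty D.Index :=
  let ⟨p, hp, _⟩ := D.exists_mem 0
  ⟨⟨p, hp⟩⟩

instance (i : D.Index) : CompleteSpace i.1 := D.completeSpace i.1 i.2

def diagram : D.Index ⥤ HilbCat 𝕜 where
  obj i := ofSubmodule i.1
  map h := toHom ⟨Submodule.inclusion (leOfHom h), fun _ => rfl⟩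

def cocone : Cocone D.diagram where
  pt := B
  ι := { app i := toHom i.1.subtypeₗᵢ }

variable {D}

theorem cocone_app_eq (s : Cocone D.diagram) {i j : D.Index} {b : B.carrier} (hi : b ∈ i.1)
    (hj : b ∈ j.1) : homFn (s.ι.app i) ⟨b, hi⟩ = homFn (s.ι.app j) ⟨b, hj⟩ := by
  obtain ⟨k, hk, hik, hjk⟩ := D.exists_ge i.1 j.1 i.2 j.2
  rw [← s.w (homOfLE (show i ≤ ⟨k, hk⟩ from hik)),
    ← s.w (homOfLE (show j ≤ ⟨k, hk⟩ from hjk))]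
  rfl

theorem exists_mem_mem (a b : B.carrier) : ∃ i : D.Index, a ∈ i.1 ∧ b ∈ i.1 := by
  obtain ⟨p, hp, ha⟩ := D.exists_mem a
  obtain ⟨q, hq, hb⟩ := D.exists_mem b
  obtain ⟨r, hr, hpr, hqr⟩ := D.exists_ge p q hp hq
  exact ⟨⟨r, hr⟩, hpr ha, hqr hb⟩

variable (D) in
noncomputable def descFun (s : Cocone D.diagram) (b : B.carrier) : s.pt.carrier :=
  homFn (s.ι.app ⟨_, (D.exists_mem b).choose_spec.1⟩) ⟨b, (D.exists_mem b).choose_spec.2⟩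

theorem descFun_eq (s : Cocone D.diagram) {i : D.Index} {b : B.carrier} (hb : b ∈ i.1) :
    D.descFun s b = homFn (s.ι.app i) ⟨b, hb⟩ :=
  cocone_app_eq s _ hb

variable (D) in
noncomputable def desc (s : Cocone D.diagram) : B ⟶ s.pt :=
  toHom
  { toFun := D.descFun s
    map_add' a b := by
      obtain ⟨i, ha, hb⟩ := exists_mem_mem (D := D) a b
      rw [descFun_eq s ha, descFun_eq s hb, descFun_eq s (add_mem ha hb)]
      exact map_add (homFn (s.ι.app i)) ⟨a, ha⟩ ⟨b, hb⟩
    map_smul' c b := by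
      obtain ⟨i, _, hb⟩ := exists_mem_mem (D := D) b b
      rw [descFun_eq s hb, descFun_eq s (smul_mem _ c hb)]
      exact map_smul (homFn (s.ι.app i)) c ⟨b, hb⟩
    norm_map' b := by
      obtain ⟨i, _, hb⟩ := exists_mem_mem (D := D) b b
      exact (congrArg norm (descFun_eq s hb)).trans ((homFn (s.ι.app i)).norm_map _) }

variable (D) in
noncomputable def isColimit : IsColimit D.cocone where
  desc := D.desc
  fac s i := LinearIsometry.ext fun b => descFun_eq s b.2
  uniq s m hm := LinearIsometry.ext fun b => by
    obtain ⟨i, _, hb⟩ := exists_mem_mem (D := D) b b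
    change homFn m b = D.descFun s b
    rw [descFun_eq s hb, ← hm i]
    rfl

variable (D) (U : HilbCat 𝕜 ⥤ Type) (hU : PreservesDirectedColimits U)
include hU

theorem exists_map_cocone_app_eq (x : U.obj B) :
    ∃ (i : D.Index) (y : U.obj (D.diagram.obj i)), U.map (D.cocone.ι.app i) y = x :=
  have := (hU D.Index).some
  Types.jointly_surjective _ (isColimitOfPreserves U D.isColimit) x

theorem exists_map_codRestrict_eq {A : HilbCat 𝕜} (f : A ⟶ B) (i : D.Index)
    (hi : ∀ a, homFn f a ∈ i.1) {x y : U.obj A} (h : U.map f x = U.map f y) :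
    ∃ (j : D.Index) (hj : ∀ a, homFn f a ∈ j.1),
      U.map (codRestrict f j.1 hj) x = U.map (codRestrict f j.1 hj) y := by
  have := (hU D.Index).some
  have hi' : U.map (D.cocone.ι.app i) (U.map (codRestrict f i.1 hi) x) =
      U.map (D.cocone.ι.app i) (U.map (codRestrict f i.1 hi) y) :=
    (U.map_comp_apply (codRestrict f i.1 hi) (D.cocone.ι.app i) x).symm.trans
      (h.trans (U.map_comp_apply (codRestrict f i.1 hi) (D.cocone.ι.app i) y))
  obtain ⟨j, hij, hj⟩ :=
    (Types.FilteredColimit.isColimit_eq_iff' (isColimitOfPreserves U D.isColimit) _ _).1 hi'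
  refine ⟨j, fun a => leOfHom hij (hi a), ?_⟩
  exact (U.map_comp_apply (codRestrict f i.1 hi) (D.diagram.map hij) x).trans
    (hj.trans (U.map_comp_apply _ _ y).symm)

end DirectedSubspaceCover

def finiteDimensionalCover (A : HilbCat 𝕜) : DirectedSubspaceCover A where
  Mem p := FiniteDimensional 𝕜 p
  completeSpace p _ := FiniteDimensional.complete 𝕜 p
  exists_ge p q _ _ := ⟨p ⊔ q, inferInstance, le_sup_left, le_sup_right⟩
  exists_mem a := ⟨span 𝕜 {a}, inferInstance, mem_span_singleton_self a⟩

def rangeCover {A B : HilbCat 𝕜} (f : A ⟶ B) : DirectedSubspaceCover B where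
  Mem p := ∃ V : Submodule 𝕜 B.carrier, FiniteDimensional 𝕜 V ∧
    p = (LinearMap.range (homFn f).toLinearMap ⊔ V).topologicalClosure
  completeSpace := by
    rintro _ ⟨V, -, rfl⟩
    exact (isClosed_topologicalClosure _).completeSpace_coe
  exists_ge := by
    rintro _ _ ⟨V, hV, rfl⟩ ⟨W, hW, rfl⟩
    exact ⟨_, ⟨V ⊔ W, inferInstance, rfl⟩,
      topologicalClosure_mono (sup_le_sup_left le_sup_left _),
      topologicalClosure_mono (sup_le_sup_left le_sup_right _)⟩
  exists_mem b := ⟨_, ⟨span 𝕜 {b}, inferInstance, rfl⟩,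
    le_topologicalClosure _ (mem_sup_right (mem_span_singleton_self b))⟩

section SuppOn

variable {U : HilbCat 𝕜 ⥤ Type} {A : HilbCat 𝕜} {A₀ : Submodule 𝕜 A.carrier} {x y : U.obj A}

theorem SuppOn.mono (hx : SuppOn U A A₀ x) {A₁ : Submodule 𝕜 A.carrier} (h : A₀ ≤ A₁) :
    SuppOn U A A₁ x :=
  fun C f g hfg => hx C f g fun a ha => hfg a (h ha)

theorem SuppOn.eq_of_map_eq (hx : SuppOn U A A₀ x) (hy : SuppOn U A A₀ y) {C : HilbCat 𝕜}
    (g : A ⟶ C) (u : A.carrier ≃ₗᵢ[𝕜] C.carrier) (hu : ∀ a ∈ A₀, u a = homFn g a)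
    (h : U.map g x = U.map g y) : x = y := by
  apply (U.mapIso (isoOfLinearIsometryEquiv u)).toEquiv.injective
  change U.map (toHom u.toLinearIsometry) x = U.map (toHom u.toLinearIsometry) y
  rw [hx C (toHom u.toLinearIsometry) g hu, hy C (toHom u.toLinearIsometry) g hu, h]

theorem exists_finiteDimensional_suppOn (hU : PreservesDirectedColimits U) (x : U.obj A) :
    ∃ A₀ : Submodule 𝕜 A.carrier, FiniteDimensional 𝕜 A₀ ∧ SuppOn U A A₀ x := by
  obtain ⟨i, y, rfl⟩ := (finiteDimensionalCover A).exists_map_cocone_app_eq U hU x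
  refine ⟨i.1, i.2, fun C f g hfg => ?_⟩
  have : (finiteDimensionalCover A).cocone.ι.app i ≫ f =
      (finiteDimensionalCover A).cocone.ι.app i ≫ g :=
    LinearIsometry.ext fun a => hfg a.1 a.2
  exact (U.map_comp_apply _ f y).symm.trans ((congrArg (U.map · y) this).trans
    (U.map_comp_apply _ g y))

end SuppOn

/-- `U` maps every linear isometric embedding `f : A ⟶ B` with `A` infinite-dimensional to an
injective function `U(A) → U(B)`. -/
theorem stmt_14 (U : HilbCat 𝕜 ⥤ Type) (hU : PreservesDirectedColimits U)
    (A B : HilbCat 𝕜) (hA : ¬ FiniteDimensional 𝕜 A.carrier) (f : A ⟶ B) :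
    Function.Injective (U.map f) := by
  intro x y hxy
  obtain ⟨Ax, _, hx⟩ := exists_finiteDimensional_suppOn hU x
  obtain ⟨Ay, _, hy⟩ := exists_finiteDimensional_suppOn hU y
  obtain ⟨⟨C, V, _, rfl⟩, hC, hxyC⟩ := (rangeCover f).exists_map_codRestrict_eq U hU f
    ⟨_, ⊥, inferInstance, rfl⟩ (fun a => le_topologicalClosure _ (mem_sup_left ⟨a, rfl⟩)) hxy
  have : FiniteDimensional 𝕜 (LinearMap.range (homFn (codRestrict f _ hC)).toLinearMap)ᗮ :=
    (homFn f).finiteDimensional_orthogonal_range_codRestrict V le_rfl hC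
  obtain ⟨u, hu⟩ := (homFn (codRestrict f _ hC)).exists_linearIsometryEquiv_eqOn hA (Ax ⊔ Ay)
  exact (hx.mono le_sup_left).eq_of_map_eq (hy.mono le_sup_right) _ u hu hxyC
end
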